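/- Local renaming of function symbols need not preserve termination: there exist TRSs R and R' and a family of term isomorphisms (φ₁, φ₂), identity on variables, mapping the two rules of R bijectively onto the rules of R', such that R is terminating but R' is not. Concretely, with F = {a, f, g, h} (ar(a)=0, ar(f)=ar(g)=ar(h)=1), 𝓡 = {f(x) → g(x), h(x) → g(a)} is terminating, 𝓡' = {f(x) → g(x), g(x) → f(a)} is not terminating, φ₁ is the identity, and φ₂ maps h ↦ g, g ↦ f, f ↦ h (fixing a and x); and indeed φ₁(f(x)→g(x)) and φ₂(h(x)→g(a)) are exactly the rules of 𝓡'. -/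

import Mathlib

/-!
Giving `f` and `h` weight `1` and `a`, `g` weight `0`, every step of `𝓡` removes one weighted
symbol and creates none, so `𝓡` terminates. The renaming `φ₂` turns the harmless rule
`h(x) → g(a)` into `g(x) → f(a)`, which together with `f(x) → g(x)` gives the loop
`f(a) → g(a) → f(a)`.
-/

set_option autoImplicit false

universe u
variable {F V F' V' F'' V'' : Type}

inductive Term (F V : Type) : Type where
  | var : V → Term F V
  | app : F → List (Term F V) → Term F V

namespace Term

def map (φF : F → F') (φV : V → V') : Term F V → Term F' V'
  | var x => var (φV x)
  | app f ts => app (φF f) (ts.attach.map fun t => map φF φV t.1)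

decreasing_by
  have := List.sizeOf_lt_of_mem t.2
  simp_wf
  omega

def subst (σ : V → Term F V) : Term F V → Term F V
  | var x => σ x
  | app f ts => app f (ts.attach.map fun t => subst σ t.1)

decreasing_by
  have := List.sizeOf_lt_of_mem t.2
  simp_wf
  omega

def vars : Term F V → Set V
  | var x => {x}
  | app _ ts => {v | ∃ t ∈ ts.attach, v ∈ vars t.1}

decreasing_by
  have := List.sizeOf_lt_of_mem t.2
  simp_wf
  omega

end Term

inductive Ctx (F V : Type) : Type where
  | hole : Ctx F V
  | app : F → List (Term F V) → Ctx F V → List (Term F V) → Ctx F V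

def Ctx.fill : Ctx F V → Term F V → Term F V
  | .hole, t => t
  | .app f pre C post, t => .app f (pre ++ [C.fill t] ++ post)

def Ctx.map (φF : F → F') (φV : V → V') : Ctx F V → Ctx F' V'
  | .hole => .hole
  | .app f pre C post => .app (φF f) (pre.map (Term.map φF φV)) (C.map φF φV) (post.map (Term.map φF φV))

abbrev Rule (F V : Type) := Term F V × Term F V

def ruleMap (φF : F → F') (φV : V → V') (p : Rule F V) : Rule F' V' :=
  (p.1.map φF φV, p.2.map φF φV)

def Rewrites (𝓡 : Set (Rule F V)) (s t : Term F V) : Prop :=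
  ∃ (C : Ctx F V) (σ : V → Term F V) (p : Rule F V),
    p ∈ 𝓡 ∧ s = C.fill (p.1.subst σ) ∧ t = C.fill (p.2.subst σ)

def IsTermIso (ar : F → ℕ) (ar' : F' → ℕ) (φF : F → F') (φV : V → V') : Prop :=
  Function.Bijective φF ∧ Function.Bijective φV ∧ ∀ f, ar' (φF f) = ar f

def IsTRS (ar : F → ℕ) (𝓡 : Set (Rule F V)) : Prop :=
  𝓡.Finite ∧ ∀ p ∈ 𝓡, (∀ x, p.1 ≠ Term.var x) ∧ p.2.vars ⊆ p.1.vars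

/-- A TRS is terminating if there is no infinite sequence of rewrite steps. -/
def Terminating {F V : Type} (𝓡 : Set (Rule F V)) : Prop :=
  ¬ ∃ seq : ℕ → Term F V, ∀ n, Rewrites 𝓡 (seq n) (seq (n + 1))

inductive F12 : Type | a | f | g | h
deriving DecidableEq

inductive V12 : Type | x
deriving DecidableEq

def ar12 : F12 → ℕ
  | .a => 0
  | _ => 1

/-- `f(x) → g(x)` -/
def rule12a : Rule F12 V12 := (Term.app .f [Term.var .x], Term.app .g [Term.var .x])
/-- `h(x) → g(a)` -/
def rule12b : Rule F12 V12 := (Term.app .h [Term.var .x], Term.app .g [Term.app .a []])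
/-- `f(x) → g(x)` -/
def rule12a' : Rule F12 V12 := (Term.app .f [Term.var .x], Term.app .g [Term.var .x])
/-- `g(x) → f(a)` -/
def rule12b' : Rule F12 V12 := (Term.app .g [Term.var .x], Term.app .f [Term.app .a []])

/-- `φ₂ : h ↦ g, g ↦ f, f ↦ h, a ↦ a`. -/
def phi2 : F12 → F12
  | .h => .g
  | .g => .f
  | .f => .h
  | .a => .a

namespace Term

theorem map_var (φF : F → F') (φV : V → V') (x : V) :
    (var x : Term F V).map φF φV = var (φV x) := by
  rw [map]

theorem map_app (φF : F → F') (φV : V → V') (f : F) (ts : List (Term F V)) :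
    (app f ts).map φF φV = app (φF f) (ts.map (map φF φV)) := by
  rw [map, List.attach_map_val (f := map φF φV)]

theorem subst_var (σ : V → Term F V) (x : V) : (var x).subst σ = σ x := by
  rw [subst]

theorem subst_app (σ : V → Term F V) (f : F) (ts : List (Term F V)) :
    (app f ts).subst σ = app f (ts.map (subst σ)) := by
  rw [subst, List.attach_map_val (f := subst σ)]

def weight (w : F → ℕ) : Term F V → ℕ
  | var _ => 0
  | app f ts => w f + (ts.attach.map fun t => weight w t.1).sum

decreasing_by
  have := List.sizeOf_lt_of_mem t.2
  simp_wf
  omega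

theorem weight_app (w : F → ℕ) (f : F) (ts : List (Term F V)) :
    (app f ts).weight w = w f + (ts.map (weight w)).sum := by
  rw [weight, List.attach_map_val (f := weight w)]

end Term

theorem Ctx.weight_fill_lt_weight_fill (w : F → ℕ) (C : Ctx F V) {t u : Term F V}
    (h : t.weight w < u.weight w) : (C.fill t).weight w < (C.fill u).weight w := by
  induction C with
  | hole => exact h
  | app f pre C post ih =>
    simp only [Ctx.fill, Term.weight_app, List.map_append, List.sum_append, List.map_cons,
      List.map_nil, List.sum_cons, List.sum_nil]
    omega

theorem rewrites_subst {𝓡 : Set (Rule F V)} {p : Rule F V} (hp : p ∈ 𝓡) (σ : V → Term F V) :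
    Rewrites 𝓡 (p.1.subst σ) (p.2.subst σ) :=
  ⟨.hole, σ, p, hp, rfl, rfl⟩

theorem terminating_of_rewrites_lt {α : Type*} [Preorder α] [WellFoundedLT α]
    {𝓡 : Set (Rule F V)} (m : Term F V → α) (hm : ∀ s t, Rewrites 𝓡 s t → m t < m s) :
    Terminating 𝓡 := fun ⟨seq, hseq⟩ =>
  not_strictAnti_of_wellFoundedLT (m ∘ seq) <|
    strictAnti_nat_of_succ_lt fun n => hm _ _ (hseq n)

theorem terminating_of_weight_subst_lt {𝓡 : Set (Rule F V)} (w : F → ℕ)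
    (hw : ∀ p ∈ 𝓡, ∀ σ : V → Term F V, (p.2.subst σ).weight w < (p.1.subst σ).weight w) :
    Terminating 𝓡 := by
  refine terminating_of_rewrites_lt (Term.weight w) ?_
  rintro _ _ ⟨C, σ, p, hp, rfl, rfl⟩
  exact C.weight_fill_lt_weight_fill w (hw p hp σ)

theorem not_terminating_of_rewrites_cycle {𝓡 : Set (Rule F V)} {s t : Term F V}
    (hst : Rewrites 𝓡 s t) (hts : Rewrites 𝓡 t s) : ¬ Terminating 𝓡 := by
  refine fun h => h ⟨fun n => if Even n then s else t, fun n => ?_⟩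
  rcases Nat.even_or_odd n with hn | hn
  · simpa [hn, Nat.even_add_one] using hst
  · have hn : ¬ Even n := Nat.not_even_iff_odd.mpr hn
    simpa [hn, Nat.even_add_one] using hts

theorem phi2_bijective : Function.Bijective phi2 :=
  Function.bijective_iff_has_inverse.mpr
    ⟨phi2 ∘ phi2, fun s => by cases s <;> rfl, fun s => by cases s <;> rfl⟩

theorem terminating_rule12 : Terminating ({rule12a, rule12b} : Set (Rule F12 V12)) := by
  refine terminating_of_weight_subst_lt (fun | .f | .h => 1 | _ => 0) ?_
  rintro p (rfl | rfl) σ <;>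
    simp [rule12a, rule12b, Term.subst_app, Term.subst_var, Term.weight_app]

theorem not_terminating_rule12' : ¬ Terminating ({rule12a', rule12b'} : Set (Rule F12 V12)) :=
  not_terminating_of_rewrites_cycle (s := .app .f [.app .a []]) (t := .app .g [.app .a []])
    (by simpa [rule12a', Term.subst_app, Term.subst_var] using
      rewrites_subst (Set.mem_insert rule12a' {rule12b'}) fun _ => .app F12.a [])
    (by simpa [rule12b', Term.subst_app, Term.subst_var] using
      rewrites_subst (Set.mem_insert_of_mem rule12a' (Set.mem_singleton rule12b')) <|
        fun _ => .app F12.a [])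

theorem local_F_renaming_not_preserving_termination :
    IsTermIso ar12 ar12 (id : F12 → F12) (id : V12 → V12) ∧
    IsTermIso ar12 ar12 phi2 (id : V12 → V12) ∧
    ruleMap (id : F12 → F12) (id : V12 → V12) rule12a = rule12a' ∧
    ruleMap phi2 (id : V12 → V12) rule12b = rule12b' ∧
    Terminating ({rule12a, rule12b} : Set (Rule F12 V12)) ∧
    ¬ Terminating ({rule12a', rule12b'} : Set (Rule F12 V12)) :=
  ⟨⟨Function.bijective_id, Function.bijective_id, fun _ => rfl⟩,
    ⟨phi2_bijective, Function.bijective_id, fun s => by cases s <;> rfl⟩,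
    by simp [ruleMap, rule12a, rule12a', Term.map_app, Term.map_var],
    by simp [ruleMap, rule12b, rule12b', phi2, Term.map_app, Term.map_var],
    terminating_rule12, not_terminating_rule12'⟩
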